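/- arXiv:2604.09641 — 3 statements merged into one kernel-verified Lean document; each statement's English description precedes it below -/
import Mathlib

section
/- Let I=(0,1), 0<b<1, σ₁>0, σ₂<0 with |σ₂|/σ₁ ≠ (1-b)/b. Define a(u,v)=∫₀^b σ₁ u'v' + ∫_b^1 σ₂ u'v' on H¹₀(I). Then there exists a bounded bijective operator T on H¹₀(I) and α>0 such that |a(v,Tv)| ≥ α‖v‖²_{H¹₀(I)} for all v ∈ H¹₀(I); in particular the associated operator A: H¹₀(I) → H⁻¹(I) is an isomorphism. -/
open MeasureTheory Set Real

noncomputable section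

/-- Membership in `H¹₀(0,1)`, represented through the weak derivative `g`:
`u(x) = ∫₀ˣ g`, with `g ∈ L²(0,1)` and `∫₀¹ g = 0` (so that `u(0)=u(1)=0`). -/
def memH10 (g : ℝ → ℝ) : Prop :=
  MemLp g 2 (volume.restrict (Ioo (0:ℝ) 1)) ∧ (∫ t in Ioo (0:ℝ) 1, g t) = 0

/-- Squared `H¹₀` norm: `‖u‖² = ∫₀¹ (u')²`. -/
def nsq (g : ℝ → ℝ) : ℝ := ∫ t in Ioo (0:ℝ) 1, (g t)^2

/-- The sign-changing bilinear form `a(u,v) = ∫₀ᵇ σ₁ u'v' + ∫ᵇ¹ σ₂ u'v'`,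
expressed through weak derivatives. -/
def aform (b σ₁ σ₂ : ℝ) (g h : ℝ → ℝ) : ℝ :=
  (∫ x in Ioo (0:ℝ) b, σ₁ * g x * h x) + ∫ x in Ioo b 1, σ₂ * g x * h x

/-!
Work with weak derivatives: `H¹₀(0,1)` is the space of mean-zero `g ∈ L²(0,1)`, and
`a(g, h) = ∫ σ g h` with the step coefficient `σ`.

For `s = ±1`, `flipOp b s g` is `g` on `(0,b)` and `-g` on `(b,1)`, each corrected by a constant
so that the integral over each side gets multiplied by `s`; it is an isometric involution of the
mean-zero functions. Writing `p = ∫₀ᵇ g = -∫ᵇ¹ g` and `E = σ₁(1-b) + σ₂b`,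
`a(g, flipOp g) = σ₁∫₀ᵇ g² - σ₂∫ᵇ¹ g² + (sE - σ₁(1-b) + σ₂b) p² / (b(1-b))`, and the
Cauchy–Schwarz bounds `p² ≤ b∫₀ᵇ g²`, `p² ≤ (1-b)∫ᵇ¹ g²` make this coercive as soon as
`sE = |E| > 0`; `E ≠ 0` is exactly the non-critical contrast.

For well-posedness, Riesz gives `ℓ v = ∫ r v`, so `a(u, v) = ℓ v` for all mean-zero `v` means
`σ u = r + c` for a constant `c`, which is pinned down by `∫ u = 0` because
`∫ σ⁻¹ = E / (σ₁σ₂) ≠ 0`.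
-/

section MeanZeroL2

variable {α : Type*} [MeasurableSpace α]

def IsMeanZeroL2 (μ : Measure α) (g : α → ℝ) : Prop :=
  MemLp g 2 μ ∧ ∫ x, g x ∂μ = 0

def centered (μ : Measure α) (f : α → ℝ) (x : α) : ℝ := f x - ∫ y, f y ∂μ

variable {μ : Measure α} {f g : α → ℝ}

theorem integral_const_mul_add_const [IsFiniteMeasure μ] (hg : Integrable g μ) (e c : ℝ) :
    ∫ x, (e * g x + c) ∂μ = e * ∫ x, g x ∂μ + μ.real univ * c := by
  rw [integral_add (hg.const_mul e) (integrable_const c), integral_const_mul, integral_const,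
    smul_eq_mul]

theorem integral_mul_add_const_sq [IsFiniteMeasure μ] (hg : MemLp g 2 μ) (e c : ℝ) :
    ∫ x, (e * g x + c) ^ 2 ∂μ
      = e ^ 2 * ∫ x, g x ^ 2 ∂μ + 2 * e * c * ∫ x, g x ∂μ + μ.real univ * c ^ 2 := by
  have hg1 : Integrable g μ := hg.integrable one_le_two
  simp_rw [fun x => show (e * g x + c) ^ 2 = e ^ 2 * g x ^ 2 + 2 * e * c * g x + c ^ 2 by ring]
  rw [integral_add (by exact (hg.integrable_sq.const_mul _).add (hg1.const_mul _))
    (integrable_const _), integral_add (hg.integrable_sq.const_mul _) (hg1.const_mul _),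
    integral_const_mul, integral_const_mul, integral_const, smul_eq_mul]

theorem integral_const_mul_mul_add_const [IsFiniteMeasure μ] (hg : MemLp g 2 μ) (σ e c : ℝ) :
    ∫ x, σ * g x * (e * g x + c) ∂μ = σ * e * ∫ x, g x ^ 2 ∂μ + σ * c * ∫ x, g x ∂μ := by
  simp_rw [fun x => show σ * g x * (e * g x + c) = σ * e * g x ^ 2 + σ * c * g x by ring]
  rw [integral_add (hg.integrable_sq.const_mul _) ((hg.integrable one_le_two).const_mul _),
    integral_const_mul, integral_const_mul]

theorem sq_integral_le_measureReal_mul_integral_sq [IsFiniteMeasure μ] (hg : MemLp g 2 μ) :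
    (∫ x, g x ∂μ) ^ 2 ≤ μ.real univ * ∫ x, g x ^ 2 ∂μ := by
  rcases eq_zero_or_neZero μ with rfl | _
  · simp
  -- expand `0 ≤ ∫ (V g - ∫ g)²` with `V = μ univ`
  have hV := measureReal_univ_pos (μ := μ)
  have h := integral_mul_add_const_sq hg (μ.real univ) (-∫ x, g x ∂μ)
  have h0 : 0 ≤ ∫ x, (μ.real univ * g x + -∫ x, g x ∂μ) ^ 2 ∂μ :=
    integral_nonneg fun _ => sq_nonneg _
  nlinarith

theorem integrable_mul_mul_of_memLp_top {σ u v : α → ℝ} (hσ : MemLp σ ⊤ μ) (hu : MemLp u 2 μ)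
    (hv : MemLp v 2 μ) : Integrable (fun x => σ x * u x * v x) μ :=
  (hu.mul' (r := 2) hσ).integrable_mul hv

theorem Lp.norm_two_sq_eq_integral_sq (f : Lp ℝ 2 μ) : ‖f‖ ^ 2 = ∫ x, f x ^ 2 ∂μ := by
  rw [← real_inner_self_eq_norm_sq, L2.inner_def]
  simp [sq]

theorem IsMeanZeroL2.const_smul (hg : IsMeanZeroL2 μ g) (c : ℝ) : IsMeanZeroL2 μ (c • g) :=
  ⟨hg.1.const_smul c, by simp only [Pi.smul_apply, smul_eq_mul, integral_const_mul, hg.2, mul_zero]⟩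

theorem IsMeanZeroL2.sub [IsFiniteMeasure μ] (hf : IsMeanZeroL2 μ f) (hg : IsMeanZeroL2 μ g) :
    IsMeanZeroL2 μ (f - g) :=
  ⟨hf.1.sub hg.1, by
    rw [integral_sub' (hf.1.integrable one_le_two) (hg.1.integrable one_le_two), hf.2, hg.2,
      sub_zero]⟩

theorem centered_congr_ae (hfg : f =ᵐ[μ] g) : centered μ f =ᵐ[μ] centered μ g := by
  filter_upwards [hfg] with x hx
  rw [centered, centered, hx, integral_congr_ae hfg]

theorem centered_add (hf : Integrable f μ) (hg : Integrable g μ) :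
    centered μ (f + g) = centered μ f + centered μ g := by
  ext x
  simp only [centered, Pi.add_apply, integral_add hf hg]
  ring

theorem centered_smul (c : ℝ) : centered μ (c • g) = c • centered μ g := by
  ext x
  simp only [centered, Pi.smul_apply, smul_eq_mul, integral_const_mul]
  ring

theorem IsMeanZeroL2.centered_eq (hg : IsMeanZeroL2 μ g) : centered μ g = g := by
  ext x
  rw [centered, hg.2, sub_zero]

variable [IsProbabilityMeasure μ]

theorem isMeanZeroL2_centered (hf : MemLp f 2 μ) : IsMeanZeroL2 μ (centered μ f) :=
  ⟨hf.sub (memLp_const _),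
    show ∫ x, (f x - ∫ y, f y ∂μ) ∂μ = 0 by
      rw [integral_sub (hf.integrable one_le_two) (integrable_const _), integral_const,
        probReal_univ, one_smul, sub_self]⟩

theorem integral_centered_sq_le (hf : MemLp f 2 μ) :
    ∫ x, centered μ f x ^ 2 ∂μ ≤ ∫ x, f x ^ 2 ∂μ := by
  show ∫ x, (f x - ∫ y, f y ∂μ) ^ 2 ∂μ ≤ _
  rw [← ProbabilityTheory.variance_eq_integral hf.1.aemeasurable]
  exact ProbabilityTheory.variance_le_expectation_sq hf.1

theorem ae_eq_integral_of_forall_integral_mul_eq_zero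
    (hf : MemLp f 2 μ) (h : ∀ v, IsMeanZeroL2 μ v → ∫ x, f x * v x ∂μ = 0) :
    f =ᵐ[μ] fun _ => ∫ x, f x ∂μ := by
  have hfm := isMeanZeroL2_centered hf
  -- `centered μ f` is an admissible test function, and
  -- `∫ (centered μ f)² = ∫ f · centered μ f - (∫ f) ∫ centered μ f`
  have hsq : ∫ x, centered μ f x ^ 2 ∂μ = 0 := by
    simp_rw [fun x => show centered μ f x ^ 2
      = f x * centered μ f x - (∫ y, f y ∂μ) * centered μ f x by rw [centered]; ring]
    rw [integral_sub (memLp_one_iff_integrable.1 (hfm.1.mul' hf))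
      ((hfm.1.integrable one_le_two).const_mul _), h _ hfm, integral_const_mul, hfm.2, mul_zero,
      sub_zero]
  filter_upwards [(integral_eq_zero_iff_of_nonneg (fun x => sq_nonneg _) hfm.1.integrable_sq).1 hsq]
    with x hx
  simpa [centered, sub_eq_zero] using hx

variable {ℓ : (α → ℝ) → ℝ} {M : ℝ}

theorem map_eq_of_ae_eq
    (hadd : ∀ g h, IsMeanZeroL2 μ g → IsMeanZeroL2 μ h → ℓ (g + h) = ℓ g + ℓ h)
    (hM : ∀ g, IsMeanZeroL2 μ g → |ℓ g| ≤ M * √(∫ x, g x ^ 2 ∂μ)) (hf : IsMeanZeroL2 μ f)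
    (hg : IsMeanZeroL2 μ g) (hfg : f =ᵐ[μ] g) : ℓ f = ℓ g := by
  have hfg' : IsMeanZeroL2 μ (f - g) := hf.sub hg
  have hnorm : ∫ x, (f - g) x ^ 2 ∂μ = 0 :=
    integral_eq_zero_of_ae (by filter_upwards [hfg] with x hx; simp [hx])
  have hzero : ℓ (f - g) = 0 := by
    have h := hM _ hfg'
    rw [hnorm, Real.sqrt_zero, mul_zero] at h
    exact abs_nonpos_iff.1 h
  rw [← add_sub_cancel g f, hadd g _ hg hfg', hzero, add_zero]

theorem exists_memLp_forall_eq_integral_mul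
    (hadd : ∀ g h, IsMeanZeroL2 μ g → IsMeanZeroL2 μ h → ℓ (g + h) = ℓ g + ℓ h)
    (hsmul : ∀ (c : ℝ) g, IsMeanZeroL2 μ g → ℓ (c • g) = c * ℓ g)
    (hM : ∀ g, IsMeanZeroL2 μ g → |ℓ g| ≤ M * √(∫ x, g x ^ 2 ∂μ)) :
    ∃ r, MemLp r 2 μ ∧ ∀ h, IsMeanZeroL2 μ h → ℓ h = ∫ x, r x * h x ∂μ := by
  have hc (f : Lp ℝ 2 μ) := isMeanZeroL2_centered (Lp.memLp f)
  have hint (f : Lp ℝ 2 μ) : Integrable f μ := (Lp.memLp f).integrable one_le_two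
  -- `ℓ ∘ centered μ` extends `ℓ` to all of `L²(μ)`, where Riesz representation applies
  let Φ : Lp ℝ 2 μ →ₗ[ℝ] ℝ :=
    { toFun := fun f => ℓ (centered μ f)
      map_add' := fun f g => by
        rw [← hadd _ _ (hc f) (hc g), ← centered_add (hint f) (hint g)]
        exact map_eq_of_ae_eq hadd hM (hc _)
          (isMeanZeroL2_centered ((Lp.memLp f).add (Lp.memLp g)))
          (centered_congr_ae (Lp.coeFn_add f g))
      map_smul' := fun c f => by
        rw [RingHom.id_apply, smul_eq_mul, ← hsmul c _ (hc f), ← centered_smul]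
        exact map_eq_of_ae_eq hadd hM (hc _)
          (isMeanZeroL2_centered ((Lp.memLp f).const_smul c))
          (centered_congr_ae (Lp.coeFn_smul c f)) }
  have hΦ (f : Lp ℝ 2 μ) : ‖Φ f‖ ≤ max M 0 * ‖f‖ :=
    calc ‖Φ f‖ ≤ M * √(∫ x, centered μ f x ^ 2 ∂μ) := hM _ (hc f)
      _ ≤ max M 0 * ‖f‖ := by
        gcongr
        · exact le_max_left _ _
        · rw [← Real.sqrt_sq (norm_nonneg f), Lp.norm_two_sq_eq_integral_sq]
          exact Real.sqrt_le_sqrt (integral_centered_sq_le (Lp.memLp f))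
  let r : Lp ℝ 2 μ := (InnerProductSpace.toDual ℝ _).symm (Φ.mkContinuous _ hΦ)
  refine ⟨r, Lp.memLp r, fun h hh => ?_⟩
  have hH := hh.1.coeFn_toLp
  calc ℓ h = Φ (hh.1.toLp h) := by
        refine map_eq_of_ae_eq hadd hM hh (hc _) ?_
        have h' := centered_congr_ae hH
        rw [hh.centered_eq] at h'
        exact h'.symm
    _ = inner ℝ r (hh.1.toLp h) := by
      rw [InnerProductSpace.toDual_symm_apply, LinearMap.mkContinuous_apply]
    _ = ∫ x, r x * h x ∂μ := by
      rw [L2.inner_def]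
      refine integral_congr_ae ?_
      filter_upwards [hH] with x hx
      simp [hx, mul_comm]

variable {σ : α → ℝ}

theorem exists_isMeanZeroL2_forall_integral_mul_mul_eq {r : α → ℝ}
    (hσinv : MemLp (fun x => (σ x)⁻¹) ⊤ μ) (hσ0 : ∀ x, σ x ≠ 0) (hD : ∫ x, (σ x)⁻¹ ∂μ ≠ 0)
    (hr : MemLp r 2 μ) :
    ∃ u, IsMeanZeroL2 μ u ∧
      ∀ v, IsMeanZeroL2 μ v → ∫ x, σ x * u x * v x ∂μ = ∫ x, r x * v x ∂μ := by
  -- `u = σ⁻¹ (r + c)`, the constant `c` being fixed by `∫ u = 0`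
  set c := -(∫ x, (σ x)⁻¹ * r x ∂μ) / ∫ x, (σ x)⁻¹ ∂μ
  refine ⟨fun x => (σ x)⁻¹ * (r x + c), ⟨(hr.add (memLp_const c)).mul' hσinv, ?_⟩,
    fun v hv => ?_⟩
  · simp_rw [mul_add]
    rw [integral_add ((hr.mul' hσinv).integrable one_le_two)
      ((hσinv.integrable le_top).mul_const c), integral_mul_const, mul_div_cancel₀ _ hD,
      add_neg_cancel]
  · calc ∫ x, σ x * ((σ x)⁻¹ * (r x + c)) * v x ∂μ = ∫ x, (r x * v x + c * v x) ∂μ := by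
          refine integral_congr_ae (ae_of_all _ fun x => ?_)
          field_simp [hσ0 x]
      _ = ∫ x, r x * v x ∂μ := by
          rw [integral_add (f := fun x => r x * v x) (hr.integrable_mul hv.1)
            ((hv.1.integrable one_le_two).const_mul c), integral_const_mul, hv.2, mul_zero,
            add_zero]

theorem ae_eq_zero_of_forall_integral_mul_mul_eq_zero {d : α → ℝ} (hσ : MemLp σ ⊤ μ)
    (hσ0 : ∀ x, σ x ≠ 0) (hD : ∫ x, (σ x)⁻¹ ∂μ ≠ 0) (hd : IsMeanZeroL2 μ d)
    (h : ∀ v, IsMeanZeroL2 μ v → ∫ x, σ x * d x * v x ∂μ = 0) :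
    d =ᵐ[μ] 0 := by
  set m := ∫ x, σ x * d x ∂μ
  have hm : (fun x => σ x * d x) =ᵐ[μ] fun _ => m :=
    ae_eq_integral_of_forall_integral_mul_eq_zero (hd.1.mul' hσ) h
  have hdm : d =ᵐ[μ] fun x => m * (σ x)⁻¹ := by
    filter_upwards [hm] with x hx
    rw [← hx]
    field_simp [hσ0 x]
  have hm0 : m = 0 := by
    have h := hd.2
    rw [integral_congr_ae hdm, integral_const_mul] at h
    exact (mul_eq_zero.1 h).resolve_right hD
  filter_upwards [hdm] with x hx
  rw [hx, hm0, zero_mul, Pi.zero_apply]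

theorem exists_ae_unique_integral_mul_mul_eq (hσ : MemLp σ ⊤ μ)
    (hσinv : MemLp (fun x => (σ x)⁻¹) ⊤ μ) (hσ0 : ∀ x, σ x ≠ 0) (hD : ∫ x, (σ x)⁻¹ ∂μ ≠ 0)
    (hadd : ∀ g h, IsMeanZeroL2 μ g → IsMeanZeroL2 μ h → ℓ (g + h) = ℓ g + ℓ h)
    (hsmul : ∀ (c : ℝ) g, IsMeanZeroL2 μ g → ℓ (c • g) = c * ℓ g)
    (hbound : ∃ M, ∀ g, IsMeanZeroL2 μ g → |ℓ g| ≤ M * √(∫ x, g x ^ 2 ∂μ)) :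
    ∃ u, IsMeanZeroL2 μ u ∧ (∀ v, IsMeanZeroL2 μ v → ∫ x, σ x * u x * v x ∂μ = ℓ v) ∧
      ∀ u', IsMeanZeroL2 μ u' → (∀ v, IsMeanZeroL2 μ v → ∫ x, σ x * u' x * v x ∂μ = ℓ v) →
        u' =ᵐ[μ] u := by
  obtain ⟨M, hM⟩ := hbound
  obtain ⟨r, hr, hrep⟩ := exists_memLp_forall_eq_integral_mul hadd hsmul hM
  obtain ⟨u, hu, hsol⟩ := exists_isMeanZeroL2_forall_integral_mul_mul_eq hσinv hσ0 hD hr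
  refine ⟨u, hu, fun v hv => (hsol v hv).trans (hrep v hv).symm, fun u' hu' hsol' => ?_⟩
  have hdiff : u' - u =ᵐ[μ] 0 :=
    ae_eq_zero_of_forall_integral_mul_mul_eq_zero hσ hσ0 hD (hu'.sub hu) fun v hv => by
      calc ∫ x, σ x * (u' - u) x * v x ∂μ
          = ∫ x, σ x * u' x * v x ∂μ - ∫ x, σ x * u x * v x ∂μ := by
            rw [← integral_sub (integrable_mul_mul_of_memLp_top hσ hu'.1 hv.1)
              (integrable_mul_mul_of_memLp_top hσ hu.1 hv.1)]
            congr 1 with x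
            rw [Pi.sub_apply]
            ring
        _ = 0 := by rw [hsol' v hv, hsol v hv, hrep v hv, sub_self]
  filter_upwards [hdiff] with x hx
  exact sub_eq_zero.1 hx

end MeanZeroL2

section UnitInterval

local notation "μ₀" => volume.restrict (Ioo (0:ℝ) 1)

instance isProbabilityMeasure_restrict_Ioo_zero_one : IsProbabilityMeasure μ₀ :=
  ⟨by simp⟩

theorem setIntegral_Ioo_eq_add {a b c : ℝ} (hab : a ≤ b) (hbc : b ≤ c) {f : ℝ → ℝ}
    (hf : IntegrableOn f (Ioo a c)) :
    ∫ x in Ioo a c, f x = (∫ x in Ioo a b, f x) + ∫ x in Ioo b c, f x := by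
  have hf' : IntervalIntegrable f volume a c :=
    (intervalIntegrable_iff_integrableOn_Ioo_of_le (hab.trans hbc)).2 hf
  simp only [← integral_Ioc_eq_integral_Ioo, ← intervalIntegral.integral_of_le, hab, hbc,
    hab.trans hbc]
  exact (intervalIntegral.integral_add_adjacent_intervals
    (hf'.mono_set (by simp [uIcc_of_le, hab, hab.trans hbc, Icc_subset_Icc_right hbc]))
    (hf'.mono_set (by simp [uIcc_of_le, hbc, hab.trans hbc, Icc_subset_Icc_left hab]))).symm

variable {b : ℝ} {g : ℝ → ℝ}

theorem memLp_Ioo_left (hb : b ≤ 1) (hg : MemLp g 2 μ₀) :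
    MemLp g 2 (volume.restrict (Ioo 0 b)) :=
  hg.mono_measure (Measure.restrict_mono_set _ (Ioo_subset_Ioo_right hb))

theorem memLp_Ioo_right (hb : 0 ≤ b) (hg : MemLp g 2 μ₀) :
    MemLp g 2 (volume.restrict (Ioo b 1)) :=
  hg.mono_measure (Measure.restrict_mono_set _ (Ioo_subset_Ioo_left hb))

def stepCoeff (b σ₁ σ₂ x : ℝ) : ℝ := if x < b then σ₁ else σ₂

variable {σ₁ σ₂ x : ℝ}

theorem stepCoeff_of_lt (hx : x < b) : stepCoeff b σ₁ σ₂ x = σ₁ := if_pos hx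

theorem stepCoeff_of_le (hx : b ≤ x) : stepCoeff b σ₁ σ₂ x = σ₂ := if_neg (not_lt.2 hx)

theorem memLp_top_stepCoeff (μ : Measure ℝ) : MemLp (stepCoeff b σ₁ σ₂) ⊤ μ :=
  memLp_top_of_bound
    ((Measurable.ite (measurableSet_lt measurable_id measurable_const) measurable_const
      measurable_const).aestronglyMeasurable) (max |σ₁| |σ₂|)
    (ae_of_all _ fun x => by unfold stepCoeff; split_ifs <;> simp)

theorem inv_stepCoeff : (stepCoeff b σ₁ σ₂ x)⁻¹ = stepCoeff b σ₁⁻¹ σ₂⁻¹ x :=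
  apply_ite _ _ _ _

theorem setIntegral_stepCoeff (hb : b ∈ Icc (0:ℝ) 1) :
    ∫ x in Ioo (0:ℝ) 1, stepCoeff b σ₁ σ₂ x = b * σ₁ + (1 - b) * σ₂ := by
  rw [setIntegral_Ioo_eq_add hb.1 hb.2 ((memLp_top_stepCoeff _).integrable le_top),
    setIntegral_congr_fun (g := fun _ => σ₁) measurableSet_Ioo fun x hx => stepCoeff_of_lt hx.2,
    setIntegral_congr_fun (g := fun _ => σ₂) measurableSet_Ioo fun x hx => stepCoeff_of_le hx.1.le,
    setIntegral_const, setIntegral_const, volume_real_Ioo_of_le hb.1,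
    volume_real_Ioo_of_le hb.2, smul_eq_mul, smul_eq_mul, sub_zero]

theorem aform_eq_setIntegral_stepCoeff (hb : b ∈ Icc (0:ℝ) 1) {h : ℝ → ℝ} (hg : MemLp g 2 μ₀)
    (hh : MemLp h 2 μ₀) :
    aform b σ₁ σ₂ g h = ∫ x in Ioo (0:ℝ) 1, stepCoeff b σ₁ σ₂ x * g x * h x := by
  rw [aform, setIntegral_Ioo_eq_add hb.1 hb.2
    (integrable_mul_mul_of_memLp_top (memLp_top_stepCoeff _) hg hh)]
  congr 1 <;> refine setIntegral_congr_fun measurableSet_Ioo fun x hx => ?_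
  · rw [stepCoeff_of_lt hx.2]
  · rw [stepCoeff_of_le hx.1.le]

theorem memH10.setIntegral_Ioo_left_add_right (hb : b ∈ Icc (0:ℝ) 1) (hg : memH10 g) :
    (∫ x in Ioo 0 b, g x) + ∫ x in Ioo b 1, g x = 0 := by
  rw [← setIntegral_Ioo_eq_add hb.1 hb.2 (hg.1.integrable one_le_two), hg.2]

def flipOp (b s : ℝ) (g : ℝ → ℝ) (x : ℝ) : ℝ :=
  stepCoeff b 1 (-1) x * g x
    + stepCoeff b ((s - 1) * (∫ t in Ioo 0 b, g t) / b)
        ((s + 1) * (∫ t in Ioo b 1, g t) / (1 - b)) x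

variable {s : ℝ}

theorem flipOp_of_lt (hx : x < b) :
    flipOp b s g x = 1 * g x + (s - 1) * (∫ t in Ioo 0 b, g t) / b := by
  rw [flipOp, stepCoeff_of_lt hx, stepCoeff_of_lt hx]

theorem flipOp_of_le (hx : b ≤ x) :
    flipOp b s g x = -1 * g x + (s + 1) * (∫ t in Ioo b 1, g t) / (1 - b) := by
  rw [flipOp, stepCoeff_of_le hx, stepCoeff_of_le hx]

theorem memLp_flipOp (hg : MemLp g 2 μ₀) : MemLp (flipOp b s g) 2 μ₀ :=
  (hg.mul' (memLp_top_stepCoeff _)).add ((memLp_top_stepCoeff _).mono_exponent le_top)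

theorem setIntegral_flipOp_left (hb : b ∈ Ioo (0:ℝ) 1) (hg : MemLp g 2 μ₀) :
    ∫ x in Ioo 0 b, flipOp b s g x = s * ∫ x in Ioo 0 b, g x := by
  rw [setIntegral_congr_fun measurableSet_Ioo fun x hx => flipOp_of_lt hx.2,
    integral_const_mul_add_const ((memLp_Ioo_left hb.2.le hg).integrable one_le_two),
    measureReal_restrict_apply_univ, volume_real_Ioo_of_le hb.1.le]
  have : b ≠ 0 := hb.1.ne'
  field_simp
  ring

theorem setIntegral_flipOp_right (hb : b ∈ Ioo (0:ℝ) 1) (hg : MemLp g 2 μ₀) :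
    ∫ x in Ioo b 1, flipOp b s g x = s * ∫ x in Ioo b 1, g x := by
  rw [setIntegral_congr_fun measurableSet_Ioo fun x hx => flipOp_of_le hx.1.le,
    integral_const_mul_add_const ((memLp_Ioo_right hb.1.le hg).integrable one_le_two),
    measureReal_restrict_apply_univ, volume_real_Ioo_of_le hb.2.le]
  have : 1 - b ≠ 0 := (sub_pos.2 hb.2).ne'
  field_simp
  ring

theorem memH10_flipOp (hb : b ∈ Ioo (0:ℝ) 1) (hg : memH10 g) : memH10 (flipOp b s g) := by
  refine ⟨memLp_flipOp hg.1, ?_⟩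
  rw [setIntegral_Ioo_eq_add hb.1.le hb.2.le
      ((memLp_flipOp hg.1).integrable one_le_two),
    setIntegral_flipOp_left hb hg.1, setIntegral_flipOp_right hb hg.1, ← mul_add,
    hg.setIntegral_Ioo_left_add_right (Ioo_subset_Icc_self hb), mul_zero]

theorem flipOp_flipOp (hb : b ∈ Ioo (0:ℝ) 1) (hs : s ^ 2 = 1) (hg : MemLp g 2 μ₀) :
    flipOp b s (flipOp b s g) = g := by
  ext x
  rcases lt_or_ge x b with hx | hx
  · rw [flipOp_of_lt hx, setIntegral_flipOp_left hb hg, flipOp_of_lt hx]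
    linear_combination (∫ t in Ioo 0 b, g t) / b * hs
  · rw [flipOp_of_le hx, setIntegral_flipOp_right hb hg, flipOp_of_le hx]
    linear_combination (∫ t in Ioo b 1, g t) / (1 - b) * hs

theorem flipOp_add (hb : b ∈ Icc (0:ℝ) 1) {h : ℝ → ℝ} (hg : MemLp g 2 μ₀) (hh : MemLp h 2 μ₀) :
    flipOp b s (g + h) = flipOp b s g + flipOp b s h := by
  ext x
  simp only [flipOp, Pi.add_apply,
    integral_add ((memLp_Ioo_left hb.2 hg).integrable one_le_two)
      ((memLp_Ioo_left hb.2 hh).integrable one_le_two),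
    integral_add ((memLp_Ioo_right hb.1 hg).integrable one_le_two)
      ((memLp_Ioo_right hb.1 hh).integrable one_le_two)]
  unfold stepCoeff
  split_ifs <;> ring

theorem flipOp_smul (c : ℝ) : flipOp b s (c • g) = c • flipOp b s g := by
  ext x
  simp only [flipOp, Pi.smul_apply, smul_eq_mul, integral_const_mul]
  unfold stepCoeff
  split_ifs <;> ring

theorem nsq_flipOp (hb : b ∈ Ioo (0:ℝ) 1) (hs : s ^ 2 = 1) (hg : MemLp g 2 μ₀) :
    nsq (flipOp b s g) = nsq g := by
  have hb' : b ∈ Icc (0:ℝ) 1 := Ioo_subset_Icc_self hb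
  rw [nsq, nsq, setIntegral_Ioo_eq_add hb'.1 hb'.2 (memLp_flipOp hg).integrable_sq,
    setIntegral_Ioo_eq_add hb'.1 hb'.2 hg.integrable_sq,
    setIntegral_congr_fun measurableSet_Ioo fun x hx => congrArg (· ^ 2) (flipOp_of_lt hx.2),
    setIntegral_congr_fun measurableSet_Ioo fun x hx => congrArg (· ^ 2) (flipOp_of_le hx.1.le),
    integral_mul_add_const_sq (memLp_Ioo_left hb'.2 hg),
    integral_mul_add_const_sq (memLp_Ioo_right hb'.1 hg), measureReal_restrict_apply_univ,
    measureReal_restrict_apply_univ, volume_real_Ioo_of_le hb'.1, volume_real_Ioo_of_le hb'.2]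
  have : b ≠ 0 := hb.1.ne'
  have : 1 - b ≠ 0 := (sub_pos.2 hb.2).ne'
  field_simp
  linear_combination
    (b * (1 - b) * (∫ x in Ioo 0 b, g x) ^ 2 + b ^ 2 * (∫ x in Ioo b 1, g x) ^ 2) * hs

theorem aform_flipOp (hb : b ∈ Ioo (0:ℝ) 1) (hg : MemLp g 2 μ₀) :
    aform b σ₁ σ₂ g (flipOp b s g)
      = σ₁ * ((∫ x in Ioo 0 b, g x ^ 2) + (s - 1) * (∫ x in Ioo 0 b, g x) ^ 2 / b)
        + σ₂ * (-(∫ x in Ioo b 1, g x ^ 2) + (s + 1) * (∫ x in Ioo b 1, g x) ^ 2 / (1 - b)) := by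
  rw [aform,
    setIntegral_congr_fun measurableSet_Ioo fun x hx =>
      congrArg (σ₁ * g x * ·) (flipOp_of_lt hx.2),
    setIntegral_congr_fun measurableSet_Ioo fun x hx =>
      congrArg (σ₂ * g x * ·) (flipOp_of_le hx.1.le),
    integral_const_mul_mul_add_const (memLp_Ioo_left hb.2.le hg),
    integral_const_mul_mul_add_const (memLp_Ioo_right hb.1.le hg)]
  ring

theorem sq_setIntegral_Ioo_le {a c : ℝ} (hac : a ≤ c) (hg : MemLp g 2 (volume.restrict (Ioo a c))) :
    (∫ x in Ioo a c, g x) ^ 2 ≤ (c - a) * ∫ x in Ioo a c, g x ^ 2 := by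
  simpa [measureReal_restrict_apply_univ, volume_real_Ioo_of_le hac]
    using sq_integral_le_measureReal_mul_integral_sq hg

theorem coercivity_estimate {α A₁ A₂ p : ℝ} (hb : b ∈ Ioo (0:ℝ) 1) (hα₁ : α ≤ σ₁)
    (hα₂ : α ≤ -σ₂) (hαs : α ≤ s * (σ₁ * (1 - b) + σ₂ * b)) (hp₁ : p ^ 2 ≤ b * A₁)
    (hp₂ : p ^ 2 ≤ (1 - b) * A₂) :
    α * (A₁ + A₂) ≤ σ₁ * (A₁ + (s - 1) * p ^ 2 / b) + σ₂ * (-A₂ + (s + 1) * p ^ 2 / (1 - b)) := by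
  obtain ⟨hb0, hb1⟩ := hb
  have hb1' : 0 < 1 - b := sub_pos.2 hb1
  -- each summand of the numerator is a product of nonnegative factors
  have key : σ₁ * (A₁ + (s - 1) * p ^ 2 / b) + σ₂ * (-A₂ + (s + 1) * p ^ 2 / (1 - b))
      - α * (A₁ + A₂)
      = ((σ₁ - α) * (b * A₁ - p ^ 2) * (1 - b) + (-σ₂ - α) * ((1 - b) * A₂ - p ^ 2) * b
        + (s * (σ₁ * (1 - b) + σ₂ * b) - α) * p ^ 2) / (b * (1 - b)) := by
    field_simp
    ring
  rw [← sub_nonneg, key]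
  have t₁ : 0 ≤ (σ₁ - α) * (b * A₁ - p ^ 2) * (1 - b) :=
    mul_nonneg (mul_nonneg (by linarith) (by linarith)) hb1'.le
  have t₂ : 0 ≤ (-σ₂ - α) * ((1 - b) * A₂ - p ^ 2) * b :=
    mul_nonneg (mul_nonneg (by linarith) (by linarith)) hb0.le
  have t₃ : 0 ≤ (s * (σ₁ * (1 - b) + σ₂ * b) - α) * p ^ 2 := mul_nonneg (by linarith) (sq_nonneg p)
  positivity

theorem le_aform_flipOp {α : ℝ} (hb : b ∈ Ioo (0:ℝ) 1) (hα₁ : α ≤ σ₁) (hα₂ : α ≤ -σ₂)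
    (hαs : α ≤ s * (σ₁ * (1 - b) + σ₂ * b)) (hg : memH10 g) :
    α * nsq g ≤ aform b σ₁ σ₂ g (flipOp b s g) := by
  have hb' : b ∈ Icc (0:ℝ) 1 := Ioo_subset_Icc_self hb
  have hq : ∫ x in Ioo b 1, g x = -∫ x in Ioo 0 b, g x :=
    eq_neg_of_add_eq_zero_right (hg.setIntegral_Ioo_left_add_right hb')
  have hp₂ := sq_setIntegral_Ioo_le hb'.2 (memLp_Ioo_right hb'.1 hg.1)
  rw [hq, neg_sq] at hp₂
  rw [aform_flipOp hb hg.1, nsq, setIntegral_Ioo_eq_add hb'.1 hb'.2 hg.1.integrable_sq, hq, neg_sq]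
  refine coercivity_estimate hb hα₁ hα₂ hαs ?_ hp₂
  simpa using sq_setIntegral_Ioo_le hb'.1 (memLp_Ioo_left hb'.2 hg.1)

theorem stepCoeff_ne_zero (h₁ : σ₁ ≠ 0) (h₂ : σ₂ ≠ 0) (x : ℝ) :
    stepCoeff b σ₁ σ₂ x ≠ 0 := by
  unfold stepCoeff
  split_ifs <;> assumption

theorem exists_ae_unique_aform_eq (hb : b ∈ Icc (0:ℝ) 1) (h₁ : σ₁ ≠ 0) (h₂ : σ₂ ≠ 0)
    (hD : b * σ₁⁻¹ + (1 - b) * σ₂⁻¹ ≠ 0) (ℓ : (ℝ → ℝ) → ℝ)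
    (hadd : ∀ g h : ℝ → ℝ, memH10 g → memH10 h → ℓ (g + h) = ℓ g + ℓ h)
    (hsmul : ∀ (c : ℝ) (g : ℝ → ℝ), memH10 g → ℓ (c • g) = c * ℓ g)
    (hbound : ∃ M, ∀ g, memH10 g → |ℓ g| ≤ M * Real.sqrt (nsq g)) :
    ∃ u, memH10 u ∧ (∀ v, memH10 v → aform b σ₁ σ₂ u v = ℓ v) ∧
      ∀ u', memH10 u' → (∀ v, memH10 v → aform b σ₁ σ₂ u' v = ℓ v) → u' =ᵐ[μ₀] u := by
  -- `memH10` is `IsMeanZeroL2 μ₀` and `nsq g` is `∫ x, g x ^ 2 ∂μ₀` by definition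
  have hσinv : MemLp (fun x => (stepCoeff b σ₁ σ₂ x)⁻¹) ⊤ μ₀ := by
    simpa only [inv_stepCoeff] using memLp_top_stepCoeff μ₀
  have hD' : ∫ x in Ioo (0:ℝ) 1, (stepCoeff b σ₁ σ₂ x)⁻¹ ≠ 0 := by
    simpa only [inv_stepCoeff, setIntegral_stepCoeff hb] using hD
  obtain ⟨u, hu, hsol, huniq⟩ := exists_ae_unique_integral_mul_mul_eq (memLp_top_stepCoeff μ₀)
    hσinv (stepCoeff_ne_zero h₁ h₂) hD' hadd hsmul hbound
  refine ⟨u, hu, fun v hv => ?_, fun u' hu' hsol' => huniq u' hu' fun v hv => ?_⟩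
  · rw [aform_eq_setIntegral_stepCoeff hb hu.1 hv.1, hsol v hv]
  · rw [← aform_eq_setIntegral_stepCoeff hb hu'.1 hv.1, hsol' v hv]

end UnitInterval

/-- T-coercivity of the local sign-changing transmission problem away from
the critical contrast, and the resulting Hadamard well-posedness. -/
theorem stmt0 (b σ₁ σ₂ : ℝ) (hb : b ∈ Ioo (0:ℝ) 1) (h1 : 0 < σ₁) (h2 : σ₂ < 0)
    (hcontrast : |σ₂| / σ₁ ≠ (1 - b) / b) :
    ∃ T : (ℝ → ℝ) → (ℝ → ℝ),
      Set.BijOn T {g | memH10 g} {g | memH10 g} ∧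
      (∀ g h : ℝ → ℝ, memH10 g → memH10 h → ∀ c : ℝ,
        T (g + h) = T g + T h ∧ T (c • g) = c • T g) ∧
      (∃ C > 0, ∀ g, memH10 g → nsq (T g) ≤ C * nsq g) ∧
      (∃ α > 0, ∀ g, memH10 g → α * nsq g ≤ |aform b σ₁ σ₂ g (T g)|) ∧
      -- in particular, A : H¹₀ → H⁻¹ is an isomorphism: for every bounded linear
      -- functional ℓ there is a unique (up to a.e. equality of derivatives) solution
      (∀ ℓ : (ℝ → ℝ) → ℝ,
        (∀ g h : ℝ → ℝ, memH10 g → memH10 h → ℓ (g + h) = ℓ g + ℓ h) →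
        (∀ (c : ℝ) (g : ℝ → ℝ), memH10 g → ℓ (c • g) = c * ℓ g) →
        (∃ M, ∀ g, memH10 g → |ℓ g| ≤ M * Real.sqrt (nsq g)) →
        ∃ u, memH10 u ∧ (∀ v, memH10 v → aform b σ₁ σ₂ u v = ℓ v) ∧
          ∀ u', memH10 u' → (∀ v, memH10 v → aform b σ₁ σ₂ u' v = ℓ v) →
            u' =ᵐ[volume.restrict (Ioo (0:ℝ) 1)] u) := by
  have hb' : b ∈ Icc (0:ℝ) 1 := Ioo_subset_Icc_self hb
  set E := σ₁ * (1 - b) + σ₂ * b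
  have hE : E ≠ 0 := by
    contrapose! hcontrast
    rw [abs_of_neg h2, div_eq_div_iff h1.ne' hb.1.ne']
    linarith
  obtain ⟨s, hs, hsE⟩ : ∃ s : ℝ, s ^ 2 = 1 ∧ s * E = |E| := by
    rcases abs_choice E with h | h
    exacts [⟨1, by norm_num, by rw [h, one_mul]⟩, ⟨-1, by norm_num, by rw [h, neg_one_mul]⟩]
  have hflip : InvOn (flipOp b s) (flipOp b s) {g | memH10 g} {g | memH10 g} :=
    ⟨fun g hg => flipOp_flipOp hb hs hg.1, fun g hg => flipOp_flipOp hb hs hg.1⟩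
  refine ⟨flipOp b s, hflip.bijOn (fun _ => memH10_flipOp hb) (fun _ => memH10_flipOp hb),
    fun g h hg hh c => ⟨flipOp_add hb' hg.1 hh.1, flipOp_smul c⟩,
    ⟨1, one_pos, fun g hg => (nsq_flipOp hb hs hg.1).trans_le (one_mul _).ge⟩,
    ⟨min (min σ₁ (-σ₂)) |E|, lt_min (lt_min h1 (neg_pos.2 h2)) (abs_pos.2 hE), fun g hg => ?_⟩,
    exists_ae_unique_aform_eq hb' h1.ne' h2.ne ?_⟩
  · refine (le_aform_flipOp hb ((min_le_left _ _).trans (min_le_left _ _))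
      ((min_le_left _ _).trans (min_le_right _ _)) ((min_le_right _ _).trans hsE.ge) hg).trans
      (le_abs_self _)
  · have := h2.ne
    rw [show b * σ₁⁻¹ + (1 - b) * σ₂⁻¹ = E / (σ₁ * σ₂) by simp only [E]; field_simp; ring]
    exact div_ne_zero hE (mul_ne_zero h1.ne' h2.ne)

end
end

section
/- Let 0<b<1 and for s∈(1/2,1) define φ^s(x)=(x/b)^s on (0,b) and ((1-x)/(1-b))^s on (b,1), and φ(x)=x/b on (0,b), (1-x)/(1-b) on (b,1). Then there is C>0 such that for 1-s sufficiently small, ‖φ^s - φ‖_{H¹(0,1)} ≤ C(1-s). -/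
open MeasureTheory Set Real

noncomputable section

/-- The fractional interface lifting `φ^s`. -/
def phis (s b : ℝ) (x : ℝ) : ℝ :=
  if x ∈ Ioo (0:ℝ) b then (x / b) ^ s
  else if x ∈ Ioo b 1 then ((1 - x) / (1 - b)) ^ s
  else 0

/-- The local interface profile `φ`. -/
def phi (b : ℝ) (x : ℝ) : ℝ :=
  if x ∈ Ioo (0:ℝ) b then x / b
  else if x ∈ Ioo b 1 then (1 - x) / (1 - b)
  else 0

/-- Derivative of `φ^s - φ` (piecewise, away from the interface `b`). -/
def dDiff (s b : ℝ) (x : ℝ) : ℝ :=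
  if x < b then s * (x / b) ^ (s - 1) / b - 1 / b
  else -(s * ((1 - x) / (1 - b)) ^ (s - 1)) / (1 - b) + 1 / (1 - b)

/-!
On each side of the interface `b`, `φ^s - φ` and its derivative are affine rescalings of
`z ^ s - z` and `s * z ^ (s - 1) - 1` on `(0, 1)`, whose squared `L²` norms are computed exactly:
`2 (1 - s)² / (3 (2s + 1)(s + 2))` and `(1 - s)² / (2s - 1)`. Both are `O((1 - s)²)` once `s`
stays away from `1/2`.
-/

open scoped Interval

lemma ae_restrict_uIoc_of_eqOn_Ioo {f g : ℝ → ℝ} {a b : ℝ} (hab : a ≤ b)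
    (h : EqOn f g (Ioo a b)) : f =ᵐ[volume.restrict (Ι a b)] g := by
  rw [uIoc_of_le hab, Measure.restrict_congr_set Ioo_ae_eq_Ioc.symm]
  exact (ae_restrict_mem measurableSet_Ioo).mono h

section Rescaling

variable {g : ℝ → ℝ}

lemma intervalIntegrable_comp_div (c : ℝ) (hg : IntervalIntegrable g volume 0 1) :
    IntervalIntegrable (fun x => g (x / c)) volume 0 c := by
  simpa [div_eq_mul_inv] using hg.comp_mul_right (c := c⁻¹)

lemma intervalIntegrable_comp_one_sub_div (b : ℝ) (hg : IntervalIntegrable g volume 0 1) :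
    IntervalIntegrable (fun x => g ((1 - x) / (1 - b))) volume b 1 := by
  simpa using ((intervalIntegrable_comp_div (1 - b) hg).comp_sub_left 1).symm

lemma integral_comp_div_zero (c : ℝ) :
    ∫ x in (0:ℝ)..c, g (x / c) = c * ∫ z in (0:ℝ)..1, g z := by
  by_cases hc : c = 0 <;> simp [hc]

lemma integral_comp_one_sub_div (b : ℝ) :
    ∫ x in b..1, g ((1 - x) / (1 - b)) = (1 - b) * ∫ z in (0:ℝ)..1, g z := by
  rw [intervalIntegral.integral_comp_sub_left (fun u => g (u / (1 - b))), sub_self,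
    integral_comp_div_zero]

lemma setIntegral_Ioo_of_eqOn_rescaled {F : ℝ → ℝ} {b α β : ℝ} (hb : b ∈ Icc (0:ℝ) 1)
    (hg : IntervalIntegrable g volume 0 1)
    (hl : EqOn F (fun x => α * g (x / b)) (Ioo 0 b))
    (hr : EqOn F (fun x => β * g ((1 - x) / (1 - b))) (Ioo b 1)) :
    ∫ x in Ioo 0 1, F x = (α * b + β * (1 - b)) * ∫ z in (0:ℝ)..1, g z := by
  have hl' := ae_restrict_uIoc_of_eqOn_Ioo hb.1 hl
  have hr' := ae_restrict_uIoc_of_eqOn_Ioo hb.2 hr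
  have il := ((intervalIntegrable_comp_div b hg).const_mul α).congr_ae hl'.symm
  have ir := ((intervalIntegrable_comp_one_sub_div b hg).const_mul β).congr_ae hr'.symm
  rw [← integral_Ioc_eq_integral_Ioo, ← intervalIntegral.integral_of_le zero_le_one,
    ← intervalIntegral.integral_add_adjacent_intervals il ir,
    intervalIntegral.integral_congr_ae_restrict hl', intervalIntegral.integral_congr_ae_restrict hr',
    intervalIntegral.integral_const_mul, intervalIntegral.integral_const_mul,
    integral_comp_div_zero, integral_comp_one_sub_div]
  ring

end Rescaling

section UnitInterval

variable {s : ℝ}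

lemma sq_rpow_sub_self_eq {z : ℝ} (hz : 0 < z) (s : ℝ) :
    (z ^ s - z) ^ 2 = z ^ (2 * s) - 2 * z ^ (s + 1) + z ^ 2 := by
  rw [two_mul, rpow_add hz, rpow_add_one hz.ne']
  ring

lemma sq_mul_rpow_sub_one_eq {z : ℝ} (hz : 0 < z) (s : ℝ) :
    (s * z ^ (s - 1) - 1) ^ 2 = s ^ 2 * z ^ (2 * s - 2) - 2 * s * z ^ (s - 1) + 1 := by
  rw [show 2 * s - 2 = (s - 1) + (s - 1) by ring, rpow_add hz]
  ring

lemma intervalIntegrable_sq_rpow_sub_self (hs : -1 / 2 < s) :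
    IntervalIntegrable (fun z : ℝ => (z ^ s - z) ^ 2) volume 0 1 := by
  have : IntervalIntegrable (fun z : ℝ => z ^ (2 * s) - 2 * z ^ (s + 1) + z ^ 2) volume 0 1 :=
    ((intervalIntegral.intervalIntegrable_rpow' (by linarith)).sub
      ((intervalIntegral.intervalIntegrable_rpow' (by linarith)).const_mul 2)).add
      ((continuous_pow 2).intervalIntegrable 0 1)
  exact this.congr_ae
    (ae_restrict_uIoc_of_eqOn_Ioo zero_le_one fun z hz => (sq_rpow_sub_self_eq hz.1 s).symm)

lemma integral_sq_rpow_sub_self (hs : -1 / 2 < s) :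
    ∫ z in (0:ℝ)..1, (z ^ s - z) ^ 2 = 2 * (1 - s) ^ 2 / (3 * (2 * s + 1) * (s + 2)) := by
  have h₁ : IntervalIntegrable (fun z : ℝ => z ^ (2 * s)) volume 0 1 :=
    intervalIntegral.intervalIntegrable_rpow' (by linarith)
  have h₂ : IntervalIntegrable (fun z : ℝ => 2 * z ^ (s + 1)) volume 0 1 :=
    (intervalIntegral.intervalIntegrable_rpow' (by linarith)).const_mul 2
  have h₃ : IntervalIntegrable (fun z : ℝ => z ^ 2) volume 0 1 :=
    (continuous_pow 2).intervalIntegrable 0 1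
  have : 2 * s + 1 ≠ 0 := by linarith
  have : s + 2 ≠ 0 := by linarith
  rw [intervalIntegral.integral_congr_ae_restrict
      (ae_restrict_uIoc_of_eqOn_Ioo zero_le_one fun z hz => sq_rpow_sub_self_eq hz.1 s),
    intervalIntegral.integral_add (h₁.sub h₂) h₃, intervalIntegral.integral_sub h₁ h₂,
    intervalIntegral.integral_const_mul, integral_rpow (by left; linarith),
    integral_rpow (by left; linarith), integral_pow, zero_rpow (by linarith),
    zero_rpow (by linarith), show s + 1 + 1 = s + 2 by ring]
  simp only [one_rpow, one_pow]
  field_simp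
  ring

lemma intervalIntegrable_sq_mul_rpow_sub_one (hs : 1 / 2 < s) :
    IntervalIntegrable (fun z : ℝ => (s * z ^ (s - 1) - 1) ^ 2) volume 0 1 := by
  have : IntervalIntegrable
      (fun z : ℝ => s ^ 2 * z ^ (2 * s - 2) - 2 * s * z ^ (s - 1) + 1) volume 0 1 :=
    (((intervalIntegral.intervalIntegrable_rpow' (by linarith)).const_mul _).sub
      ((intervalIntegral.intervalIntegrable_rpow' (by linarith)).const_mul _)).add
      intervalIntegrable_const
  exact this.congr_ae
    (ae_restrict_uIoc_of_eqOn_Ioo zero_le_one fun z hz => (sq_mul_rpow_sub_one_eq hz.1 s).symm)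

lemma integral_sq_mul_rpow_sub_one (hs : 1 / 2 < s) :
    ∫ z in (0:ℝ)..1, (s * z ^ (s - 1) - 1) ^ 2 = (1 - s) ^ 2 / (2 * s - 1) := by
  have h₁ : IntervalIntegrable (fun z : ℝ => s ^ 2 * z ^ (2 * s - 2)) volume 0 1 :=
    (intervalIntegral.intervalIntegrable_rpow' (by linarith)).const_mul _
  have h₂ : IntervalIntegrable (fun z : ℝ => 2 * s * z ^ (s - 1)) volume 0 1 :=
    (intervalIntegral.intervalIntegrable_rpow' (by linarith)).const_mul _
  have : s ≠ 0 := by linarith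
  have : s * 2 - 1 ≠ 0 := by linarith
  rw [intervalIntegral.integral_congr_ae_restrict
      (ae_restrict_uIoc_of_eqOn_Ioo zero_le_one fun z hz => sq_mul_rpow_sub_one_eq hz.1 s),
    intervalIntegral.integral_add (h₁.sub h₂) intervalIntegrable_const,
    intervalIntegral.integral_sub h₁ h₂, intervalIntegral.integral_const_mul,
    intervalIntegral.integral_const_mul, integral_rpow (by left; linarith),
    integral_rpow (by left; linarith), intervalIntegral.integral_const, zero_rpow (by linarith),
    zero_rpow (by linarith), show 2 * s - 2 + 1 = 2 * s - 1 by ring, sub_add_cancel]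
  simp only [one_rpow, sub_zero, smul_eq_mul, mul_one]
  field_simp
  ring

end UnitInterval

section Profile

variable {s b : ℝ}

lemma integral_sq_phis_sub_phi (hb : b ∈ Icc (0:ℝ) 1) (hs : -1 / 2 < s) :
    ∫ x in Ioo 0 1, (phis s b x - phi b x) ^ 2 = 2 * (1 - s) ^ 2 / (3 * (2 * s + 1) * (s + 2)) := by
  rw [setIntegral_Ioo_of_eqOn_rescaled (α := 1) (β := 1) hb
      (intervalIntegrable_sq_rpow_sub_self hs), integral_sq_rpow_sub_self hs]
  · ring
  · intro x hx
    simp [phis, phi, hx]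
  · intro x hx
    have : x ∉ Ioo 0 b := fun h => h.2.not_gt hx.1
    simp [phis, phi, hx, this]

lemma integral_sq_dDiff (hb : b ∈ Ioo (0:ℝ) 1) (hs : 1 / 2 < s) :
    ∫ x in Ioo 0 1, dDiff s b x ^ 2 = (1 / b + 1 / (1 - b)) * ((1 - s) ^ 2 / (2 * s - 1)) := by
  obtain ⟨hb0, hb1⟩ := hb
  rw [setIntegral_Ioo_of_eqOn_rescaled (α := (1 / b) ^ 2) (β := (1 / (1 - b)) ^ 2) ⟨hb0.le, hb1.le⟩
      (intervalIntegrable_sq_mul_rpow_sub_one hs), integral_sq_mul_rpow_sub_one hs]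
  · have : 1 - b ≠ 0 := by linarith
    field_simp
  · intro x hx
    simp only [dDiff, if_pos hx.2]
    ring
  · intro x hx
    simp only [dDiff, if_neg hx.1.not_gt]
    ring

end Profile

/-- `‖φ^s - φ‖_{H¹(0,1)} ≤ C (1-s)` for `1-s` sufficiently small, stated
through the squared `H¹` norm. -/
theorem stmt7 (b : ℝ) (hb : b ∈ Ioo (0:ℝ) 1) :
    ∃ C > 0, ∃ s₀ ∈ Ioo (1/2 : ℝ) 1, ∀ s ∈ Ioo s₀ 1,
      (∫ x in Ioo (0:ℝ) 1, (phis s b x - phi b x)^2) +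
        (∫ x in Ioo (0:ℝ) 1, (dDiff s b x)^2) ≤ (C * (1 - s))^2 := by
  obtain ⟨hb0, hb1⟩ := hb
  set K := 1 + 2 / b + 2 / (1 - b)
  have hK : 1 ≤ K := by
    have : 0 < 1 - b := by linarith
    have : 0 ≤ 2 / b + 2 / (1 - b) := by positivity
    linarith
  refine ⟨K, by linarith, 3 / 4, by norm_num, fun s ⟨hs, hs1⟩ => ?_⟩
  rw [integral_sq_phis_sub_phi ⟨hb0.le, hb1.le⟩ (by linarith),
    integral_sq_dDiff ⟨hb0, hb1⟩ (by linarith)]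
  have hL2 : 2 * (1 - s) ^ 2 / (3 * (2 * s + 1) * (s + 2)) ≤ (1 - s) ^ 2 := by
    rw [div_le_iff₀ (by positivity)]
    nlinarith [sq_nonneg (1 - s)]
  have hH1 : (1 - s) ^ 2 / (2 * s - 1) ≤ 2 * (1 - s) ^ 2 := by
    rw [div_le_iff₀ (by linarith)]
    nlinarith [sq_nonneg (1 - s)]
  calc _ ≤ (1 - s) ^ 2 + (1 / b + 1 / (1 - b)) * (2 * (1 - s) ^ 2) := by
        gcongr
    _ = K * (1 - s) ^ 2 := by ring
    _ ≤ (K * (1 - s)) ^ 2 := by rw [mul_pow]; gcongr; nlinarith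

end
end

section
/- Let 0<b<1, σ₁>0, σ₂<0 with σ₁(1-b)+σ₂b ≠ 0, let f ∈ L²(0,1), and let u be the weak solution of -(σ(x)u')' = f on (0,1) with u(0)=u(1)=0, where σ=σ₁ on (0,b) and σ=σ₂ on (b,1). Then (σ₁/b + σ₂/(1-b)) · u(b) = ∫₀¹ f(x)φ(x) dx, where φ(x)=x/b on (0,b) and (1-x)/(1-b) on (b,1). -/
open MeasureTheory Set Real

noncomputable section

/-! Test the weak formulation with `v = φ'`, equal to `1/b` on `(0,b)` and `-1/(1-b)` on
`(b,1)`. It has mean zero and primitive `φ`, so it is admissible and the right-hand side becomes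
`∫ f φ`; the left-hand side is `(σ₁/b) ∫₀ᵇ u' - (σ₂/(1-b)) ∫_b¹ u'`, and `∫_b¹ u' = -u(b)`
because `u(1) = 0`. -/

lemma setIntegral_Ioo_const {a c : ℝ} (hac : a ≤ c) (k : ℝ) :
    ∫ _ in Ioo a c, k = (c - a) * k := by
  rw [setIntegral_const, measureReal_def, Real.volume_Ioo, ENNReal.toReal_ofReal (by linarith),
    smul_eq_mul]

lemma setIntegral_Ioo_add_Ioo {E : Type*} [NormedAddCommGroup E] [NormedSpace ℝ E]
    {g : ℝ → E} {a b c : ℝ} (hab : a ≤ b) (hbc : b ≤ c) (hg : IntegrableOn g (Ioo a c)) :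
    (∫ t in Ioo a b, g t) + ∫ t in Ioo b c, g t = ∫ t in Ioo a c, g t := by
  have hac := hab.trans hbc
  rw [← integral_Ioc_eq_integral_Ioo, ← integral_Ioc_eq_integral_Ioo,
    ← integral_Ioc_eq_integral_Ioo, ← intervalIntegral.integral_of_le hab,
    ← intervalIntegral.integral_of_le hbc, ← intervalIntegral.integral_of_le hac]
  have hg' := (intervalIntegrable_iff_integrableOn_Ioo_of_le hac).2 hg
  exact intervalIntegral.integral_add_adjacent_intervals
    (hg'.mono_set (by rw [uIcc_of_le hab, uIcc_of_le hac]; exact Icc_subset_Icc_right hbc))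
    (hg'.mono_set (by rw [uIcc_of_le hbc, uIcc_of_le hac]; exact Icc_subset_Icc_left hab))

lemma setIntegral_mul_mul_of_eqOn_const {α : Type*} [MeasurableSpace α] {μ : Measure α}
    {g v : α → ℝ} {s : Set α} {k : ℝ} (hs : MeasurableSet s) (hv : EqOn v (fun _ => k) s)
    (c : ℝ) : ∫ x in s, c * g x * v x ∂μ = c * k * ∫ x in s, g x ∂μ := by
  rw [← integral_const_mul]
  exact setIntegral_congr_fun hs fun x hx => by rw [hv hx]; ring

def phiDeriv (b : ℝ) : ℝ → ℝ :=
  (Ioo 0 b).indicator (fun _ => 1 / b) + (Ioo b 1).indicator (fun _ => -(1 / (1 - b)))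

section phiDeriv

variable {b : ℝ}

lemma phiDeriv_of_mem_left {x : ℝ} (hx : x ∈ Ioo 0 b) : phiDeriv b x = 1 / b := by
  have hx' : x ∉ Ioo b 1 := fun h => h.1.not_gt hx.2
  simp [phiDeriv, indicator_of_mem hx, indicator_of_notMem hx']

lemma phiDeriv_of_mem_right {x : ℝ} (hx : x ∈ Ioo b 1) : phiDeriv b x = -(1 / (1 - b)) := by
  have hx' : x ∉ Ioo 0 b := fun h => h.2.not_gt hx.1
  simp [phiDeriv, indicator_of_mem hx, indicator_of_notMem hx']

lemma memLp_phiDeriv (p : ENNReal) (μ : Measure ℝ) [IsFiniteMeasure μ] :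
    MemLp (phiDeriv b) p μ :=
  .add (memLp_indicator_const p measurableSet_Ioo _ (Or.inr (measure_ne_top _ _)))
    (memLp_indicator_const p measurableSet_Ioo _ (Or.inr (measure_ne_top _ _)))

lemma setIntegral_phiDeriv_of_le (hb : 0 < b) {x : ℝ} (hx0 : 0 ≤ x) (hxb : x ≤ b) :
    ∫ t in Ioo 0 x, phiDeriv b t = x / b := by
  rw [setIntegral_congr_fun measurableSet_Ioo
      fun t ht => phiDeriv_of_mem_left ⟨ht.1, ht.2.trans_le hxb⟩,
    setIntegral_Ioo_const hx0]
  field_simp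
  ring

lemma setIntegral_phiDeriv_of_ge (hb : b ∈ Ioo 0 1) {x : ℝ} (hbx : b ≤ x) (hx1 : x ≤ 1) :
    ∫ t in Ioo 0 x, phiDeriv b t = (1 - x) / (1 - b) := by
  have h1b : 1 - b ≠ 0 := by linarith [hb.2]
  rw [← setIntegral_Ioo_add_Ioo hb.1.le hbx ((memLp_phiDeriv 1 _).integrable le_rfl),
    setIntegral_phiDeriv_of_le hb.1 hb.1.le le_rfl, div_self hb.1.ne',
    setIntegral_congr_fun measurableSet_Ioo
      fun t ht => phiDeriv_of_mem_right ⟨ht.1, ht.2.trans_le hx1⟩,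
    setIntegral_Ioo_const hbx]
  field_simp
  ring

lemma memH10_phiDeriv (hb : b ∈ Ioo 0 1) : memH10 (phiDeriv b) :=
  ⟨memLp_phiDeriv 2 _, by rw [setIntegral_phiDeriv_of_ge hb hb.2.le le_rfl]; simp⟩

lemma setIntegral_phiDeriv_eq_phi (hb : b ∈ Ioo 0 1) {x : ℝ} (hx : x ∈ Ioo 0 1)
    (hxb : x ≠ b) :
    ∫ t in Ioo 0 x, phiDeriv b t = phi b x := by
  rcases hxb.lt_or_gt with hlt | hgt
  · rw [setIntegral_phiDeriv_of_le hb.1 hx.1.le hlt.le, phi, if_pos ⟨hx.1, hlt⟩]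
  · rw [setIntegral_phiDeriv_of_ge hb hgt.le hx.2.le, phi, if_neg fun h => h.2.not_gt hgt,
      if_pos ⟨hgt, hx.2⟩]

lemma setIntegral_mul_setIntegral_phiDeriv (hb : b ∈ Ioo 0 1) (f : ℝ → ℝ) :
    ∫ x in Ioo 0 1, f x * (∫ t in Ioo 0 x, phiDeriv b t) = ∫ x in Ioo 0 1, f x * phi b x := by
  refine setIntegral_congr_ae measurableSet_Ioo ?_
  filter_upwards [measure_eq_zero_iff_ae_notMem.1 (measure_singleton b)] with x hxb hx
  rw [setIntegral_phiDeriv_eq_phi hb hx hxb]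

end phiDeriv

theorem stmt12_general (b σ₁ σ₂ : ℝ) (hb : b ∈ Ioo (0:ℝ) 1)
    (f : ℝ → ℝ)
    (g : ℝ → ℝ) (hg : memH10 g)
    (hweak : ∀ v, memH10 v →
      ((∫ x in Ioo (0:ℝ) b, σ₁ * g x * v x) + ∫ x in Ioo b 1, σ₂ * g x * v x) =
        ∫ x in Ioo (0:ℝ) 1, f x * (∫ t in Ioo (0:ℝ) x, v t)) :
    (σ₁ / b + σ₂ / (1 - b)) * (∫ t in Ioo (0:ℝ) b, g t) =
      ∫ x in Ioo (0:ℝ) 1, f x * phi b x := by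
  have hsplit : (∫ t in Ioo 0 b, g t) + ∫ t in Ioo b 1, g t = 0 :=
    (setIntegral_Ioo_add_Ioo hb.1.le hb.2.le (hg.1.integrable one_le_two)).trans hg.2
  have hw := hweak _ (memH10_phiDeriv hb)
  rw [setIntegral_mul_mul_of_eqOn_const measurableSet_Ioo fun _ => phiDeriv_of_mem_left,
    setIntegral_mul_mul_of_eqOn_const measurableSet_Ioo fun _ => phiDeriv_of_mem_right,
    setIntegral_mul_setIntegral_phiDeriv hb] at hw
  rw [← hw, eq_neg_of_add_eq_zero_right hsplit]
  ring

/-- Interface value formula for the local transmission problem: if `u` (with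
weak derivative `g`) is the weak solution of `-(σ u')' = f`, `u(0)=u(1)=0`,
then `(σ₁/b + σ₂/(1-b)) u(b) = ∫₀¹ f φ`. Here `u(x) = ∫₀ˣ g`. -/
theorem stmt12 (b σ₁ σ₂ : ℝ) (hb : b ∈ Ioo (0:ℝ) 1)
    (h1 : 0 < σ₁) (h2 : σ₂ < 0) (hnd : σ₁ * (1 - b) + σ₂ * b ≠ 0)
    (f : ℝ → ℝ) (hf : MemLp f 2 (volume.restrict (Ioo (0:ℝ) 1)))
    (g : ℝ → ℝ) (hg : memH10 g)
    (hweak : ∀ v, memH10 v →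
      ((∫ x in Ioo (0:ℝ) b, σ₁ * g x * v x) + ∫ x in Ioo b 1, σ₂ * g x * v x) =
        ∫ x in Ioo (0:ℝ) 1, f x * (∫ t in Ioo (0:ℝ) x, v t)) :
    (σ₁ / b + σ₂ / (1 - b)) * (∫ t in Ioo (0:ℝ) b, g t) =
      ∫ x in Ioo (0:ℝ) 1, f x * phi b x :=
  stmt12_general b σ₁ σ₂ hb f g hg hweak

end
end
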